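/- Sub-optimality of pure min-cut investment for a behavioral defender: let N < M, α ∈ (0,1), and fix positive investments x_1,…,x_n > 0 on min-cut edges of a path. Define f(ε) = k·(Nε/M)^α + ∑_{i=1}^n (x_i − ε)^α for some k ≥ 1. Then f'(ε) → +∞ as ε ↓ 0, and consequently there exists ε̄ > 0 such that f(ε) > f(0) for all ε ∈ (0, ε̄). -/

import Mathlib

/-!
Since `α < 1`, the derivative `k c α (c ε)^(α-1)` of `k (c ε)^α` blows up as `ε ↓ 0`, while
`ε ↦ ∑ i, (x i - ε)^α` is `C¹` near `0` because every `x i` is positive; hence `f' → +∞` at `0⁺`.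
So `f' > 0` on some `(0, ε̄)`, and `f`, being continuous at `0`, is strictly increasing on `[0, ε̄)`.
-/

open Filter Set Real Topology

theorem exists_forall_lt_of_eventually_deriv_pos {f : ℝ → ℝ} {a : ℝ}
    (hf : ContinuousWithinAt f (Ici a) a) (hf' : ∀ᶠ x in 𝓝[>] a, 0 < deriv f x) :
    ∃ b > a, ∀ x ∈ Ioo a b, f a < f x := by
  obtain ⟨b, hab, hpos⟩ := mem_nhdsGT_iff_exists_Ioo_subset.mp hf'
  have hcont : ContinuousOn f (Ico a b) := by
    intro x hx
    rcases hx.1.eq_or_lt with rfl | hax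
    · exact hf.mono Ico_subset_Ici_self
    · exact (differentiableAt_of_deriv_ne_zero (hpos ⟨hax, hx.2⟩).ne').continuousAt
        |>.continuousWithinAt
  have hmono : StrictMonoOn f (Ico a b) :=
    strictMonoOn_of_deriv_pos (convex_Ico a b) hcont (by rwa [interior_Ico])
  exact ⟨b, hab, fun x hx => hmono (left_mem_Ico.mpr hab) (Ioo_subset_Ico_self hx) hx.1⟩

theorem tendsto_deriv_add_of_contDiffAt {g h : ℝ → ℝ} {a : ℝ}
    (hg : Tendsto (deriv g) (𝓝[>] a) atTop) (hh : ContDiffAt ℝ 1 h a) :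
    Tendsto (deriv fun x => g x + h x) (𝓝[>] a) atTop := by
  have hh' : Tendsto (deriv h) (𝓝[>] a) (𝓝 (deriv h a)) :=
    ((hh.derivWithin (m := 0) le_rfl).continuousAt.tendsto).mono_left nhdsWithin_le_nhds
  refine (hg.atTop_add hh').congr' ?_
  filter_upwards [hg.eventually_ne_atTop 0,
    nhdsWithin_le_nhds ((hh.eventually (by simp)).mono fun _ h => h.differentiableAt one_ne_zero)]
    with x hgx hhx
  exact (deriv_add (differentiableAt_of_deriv_ne_zero hgx) hhx).symm

theorem tendsto_deriv_const_mul_rpow_mul_nhdsGT_zero {k c α : ℝ} (hk : 0 < k) (hc : 0 < c)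
    (hα0 : 0 < α) (hα1 : α < 1) :
    Tendsto (deriv fun ε => k * (c * ε) ^ α) (𝓝[>] 0) atTop := by
  have hderiv : ∀ ε > 0, HasDerivAt (fun ε => k * (c * ε) ^ α)
      (k * c * α * (c * ε) ^ (α - 1)) ε := fun ε hε =>
    ((((hasDerivAt_id ε).const_mul c).rpow_const (Or.inl (mul_pos hc hε).ne')).const_mul k)
      |>.congr_deriv (by simp only [id, mul_one]; ring)
  have hlin : Tendsto (fun ε => c * ε) (𝓝[>] 0) (𝓝[>] 0) := by
    simpa only [comap_mulLeft_nhdsGT_zero hc] using tendsto_comap (f := (c * ·)) (x := 𝓝[>] 0)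
  have hpow : Tendsto (fun ε => k * c * α * (c * ε) ^ (α - 1)) (𝓝[>] 0) atTop :=
    ((tendsto_rpow_neg_nhdsGT_zero (by linarith)).comp hlin).const_mul_atTop (by positivity)
  refine hpow.congr' ?_
  filter_upwards [self_mem_nhdsWithin] with ε hε
  exact (hderiv ε hε).deriv.symm

theorem stmt16_general (α : ℝ) (hα : α ∈ Set.Ioo (0:ℝ) 1)
    (N M : ℕ) (hN : 0 < N) (hNM : N < M)
    (k : ℝ) (hk : 1 ≤ k)
    (n : ℕ) (x : Fin n → ℝ) (hx : ∀ i, 0 < x i) :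
    ∀ f : ℝ → ℝ,
      (f = fun ε => k * ((N : ℝ) * ε / (M : ℝ)) ^ α + ∑ i, (x i - ε) ^ α) →
      (Filter.Tendsto (deriv f) (nhdsWithin 0 (Set.Ioi 0)) Filter.atTop ∧
       ∃ εbar > (0:ℝ), ∀ ε ∈ Set.Ioo (0:ℝ) εbar, f ε > f 0) := by
  rintro f rfl
  obtain ⟨hα0, hα1⟩ := hα
  have hNM_pos : (0 : ℝ) < N / M := div_pos (by exact_mod_cast hN) (by exact_mod_cast hN.trans hNM)
  have hsum : ContDiffAt ℝ 1 (fun ε => ∑ i, (x i - ε) ^ α) 0 :=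
    ContDiffAt.sum fun i _ => (contDiffAt_const.sub contDiffAt_id).rpow_const_of_ne
      (by simpa using (hx i).ne')
  have hderiv := tendsto_deriv_add_of_contDiffAt
    (tendsto_deriv_const_mul_rpow_mul_nhdsGT_zero (k := k) (by linarith) hNM_pos hα0 hα1) hsum
  simp only [← mul_div_right_comm] at hderiv
  refine ⟨hderiv, exists_forall_lt_of_eventually_deriv_pos ?_ (hderiv.eventually_gt_atTop 0)⟩
  have hrpow : Continuous fun t : ℝ => t ^ α := continuous_rpow_const hα0.le
  exact Continuous.continuousWithinAt (by fun_prop)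

/-- Sub-optimality of pure min-cut investment for a behavioral defender: with
`f(ε) = k (Nε/M)^α + ∑_i (x_i - ε)^α`, the derivative of `f` blows up as `ε ↓ 0`, and
there is `ε̄ > 0` with `f(ε) > f(0)` for all `ε ∈ (0, ε̄)`. -/
theorem stmt16 (α : ℝ) (hα : α ∈ Set.Ioo (0:ℝ) 1)
    (N M : ℕ) (hN : 0 < N) (hNM : N < M)
    (k : ℝ) (hk : 1 ≤ k)
    (n : ℕ) (hn : 1 ≤ n) (x : Fin n → ℝ) (hx : ∀ i, 0 < x i) :
    ∀ f : ℝ → ℝ,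
      (f = fun ε => k * ((N : ℝ) * ε / (M : ℝ)) ^ α + ∑ i, (x i - ε) ^ α) →
      (Filter.Tendsto (deriv f) (nhdsWithin 0 (Set.Ioi 0)) Filter.atTop ∧
       ∃ εbar > (0:ℝ), ∀ ε ∈ Set.Ioo (0:ℝ) εbar, f ε > f 0) :=
  stmt16_general α hα N M hN hNM k hk n x hx
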